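/- arXiv:2409.07795 — 6 statements merged into one kernel-verified Lean document; each statement's English description precedes it below -/
import Mathlib

section
/- Let f_X, f_C, f̃_X, f̃_C be probability densities on ℝ with survival functions S_X, S_C, S̃_X, S̃_C, all survival functions strictly positive. Suppose (i) f_X(x) S_C(x) = f̃_X(x) S̃_C(x) for all x, (ii) S_X(c) f_C(c) = S̃_X(c) f̃_C(c) for all c, and (iii) S_X(t) S_C(t) = S̃_X(t) S̃_C(t) for all t. Then f_X = f̃_X and f_C = f̃_C. -/
/-!
Dividing (i) by (iii) shows that `X` has the same hazard in both models: `fX TX = gX SX`.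
Then `ψ = SX - TX` is absolutely continuous with `ψ' = gX - fX = -gX ψ / TX` a.e., so
`(ψ²)' ≤ 0`; since `ψ → 0` at `-∞`, `ψ² ≤ 0`, i.e. `SX = TX`, and equal hazards then give
`fX = gX`. The censoring variable `C` is handled symmetrically.
-/

open MeasureTheory Set Filter Topology

theorem AbsolutelyContinuousOnInterval.antitoneOn_of_ae_deriv_nonpos {F : ℝ → ℝ} {a b : ℝ}
    (hF : AbsolutelyContinuousOnInterval F a b) (hF' : ∀ᵐ x, x ∈ uIcc a b → deriv F x ≤ 0) :
    AntitoneOn F (uIcc a b) := by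
  intro x hx y hy hxy
  have hsub : Icc x y ⊆ uIcc a b := Icc_subset_uIcc.trans (uIcc_subset_uIcc hx hy)
  have hint : 0 ≤ ∫ u in x..y, -deriv F u := by
    refine intervalIntegral.integral_nonneg_of_ae_restrict hxy ?_
    filter_upwards [(ae_restrict_iff' measurableSet_Icc).2 (ae_of_all _ fun u hu ↦ hsub hu),
      ae_restrict_of_ae hF'] with u hu hu'
    exact neg_nonneg.2 (hu' hu)
  have := (hF.mono (uIcc_subset_uIcc hx hy)).integral_deriv_eq_sub
  rw [intervalIntegral.integral_neg] at hint
  linarith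

namespace MeasureTheory.Integrable

variable {d : ℝ → ℝ}

theorem integral_Ioi_eq_sub_intervalIntegral (hd : Integrable d) (c t : ℝ) :
    ∫ x in Ioi t, d x = (∫ x in Ioi c, d x) - ∫ x in c..t, d x :=
  eq_sub_of_add_eq' (intervalIntegral.integral_interval_add_Ioi hd.integrableOn hd.integrableOn)

theorem absolutelyContinuousOnInterval_integral_Ioi (hd : Integrable d) (a b : ℝ) :
    AbsolutelyContinuousOnInterval (fun t ↦ ∫ x in Ioi t, d x) a b := by
  rw [funext (hd.integral_Ioi_eq_sub_intervalIntegral a)]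
  exact (LipschitzWith.const _).lipschitzOnWith.absolutelyContinuousOnInterval.sub
    (hd.intervalIntegrable.absolutelyContinuousOnInterval_intervalIntegral left_mem_uIcc)

theorem ae_hasDerivAt_integral_Ioi (hd : Integrable d) :
    ∀ᵐ x, HasDerivAt (fun t ↦ ∫ y in Ioi t, d y) (-d x) x := by
  filter_upwards [LocallyIntegrable.ae_hasDerivAt_integral hd.locallyIntegrable] with x hx
  rw [funext (hd.integral_Ioi_eq_sub_intervalIntegral 0)]
  simpa using (hx 0).const_sub (∫ y in Ioi 0, d y)

theorem tendsto_integral_Ioi_atBot (hd : Integrable d) :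
    Tendsto (fun t ↦ ∫ x in Ioi t, d x) atBot (𝓝 (∫ x, d x)) :=
  (aecover_Ioi tendsto_id).integral_tendsto_of_countably_generated hd

end MeasureTheory.Integrable

theorem hazard_eq_of_mul_eq_mul {R : Type*} [CommRing R] [IsDomain R] {a b s s' c c' : R}
    (hc : c ≠ 0) (hc' : c' ≠ 0) (ha : a * c = b * c') (hs : s * c = s' * c') :
    a * s' = b * s :=
  mul_right_cancel₀ (mul_ne_zero hc hc') (by linear_combination s' * c' * ha - b * c' * hs)

theorem survival_eq_of_hazard_eq {f g S T : ℝ → ℝ} (hf : Integrable f) (hg : Integrable g)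
    (hg₀ : 0 ≤ᵐ[volume] g) (hfg : ∫ x, f x = ∫ x, g x)
    (hS : ∀ t, S t = ∫ x in Ioi t, f x) (hT : ∀ t, T t = ∫ x in Ioi t, g x)
    (hT_pos : ∀ t, 0 < T t) (h : ∀ᵐ x, f x * T x = g x * S x) : S = T := by
  have hd : Integrable (f - g) := hf.sub hg
  set ψ : ℝ → ℝ := fun t ↦ ∫ x in Ioi t, (f - g) x
  have hψ_sub : ∀ t, ψ t = S t - T t := fun t ↦ by
    rw [hS, hT]; exact integral_sub hf.integrableOn hg.integrableOn
  have hψ_deriv : ∀ᵐ x, HasDerivAt ψ (-(f - g) x) x := hd.ae_hasDerivAt_integral_Ioi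
  -- `(f - g) T = g ψ` with `T > 0`, so `ψ (f - g) = g ψ² / T ≥ 0` and `ψ²` decreases.
  have hsign : ∀ᵐ x, 0 ≤ ψ x * (f - g) x := by
    filter_upwards [h, hg₀] with x hx hgx
    have : ψ x * (f - g) x * T x = g x * (ψ x * ψ x) := by
      rw [Pi.sub_apply]; linear_combination ψ x * hx - g x * ψ x * hψ_sub x
    exact nonneg_of_mul_nonneg_left (this ▸ mul_nonneg hgx (mul_self_nonneg _)) (hT_pos x)
  have hanti : Antitone fun t ↦ ψ t * ψ t := by
    intro a b hab
    have hAC : AbsolutelyContinuousOnInterval ψ a b :=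
      hd.absolutelyContinuousOnInterval_integral_Ioi a b
    refine (hAC.fun_mul hAC).antitoneOn_of_ae_deriv_nonpos ?_ left_mem_uIcc right_mem_uIcc hab
    filter_upwards [hψ_deriv, hsign] with x hx hx₀ _
    rw [(hx.fun_mul hx).deriv]
    linarith
  have hlim : Tendsto (fun t ↦ ψ t * ψ t) atBot (𝓝 0) := by
    have hψ_lim : Tendsto ψ atBot (𝓝 (∫ x, (f - g) x)) := hd.tendsto_integral_Ioi_atBot
    rw [Pi.sub_def, integral_sub hf hg, hfg, sub_self] at hψ_lim
    simpa using hψ_lim.mul hψ_lim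
  funext t
  have : ψ t * ψ t ≤ 0 := ge_of_tendsto hlim (eventually_atBot.2 ⟨t, fun a ha ↦ hanti ha⟩)
  rw [← sub_eq_zero, ← hψ_sub]
  exact mul_self_eq_zero.1 (le_antisymm this (mul_self_nonneg _))

theorem stmt_4_general (fX fC gX gC SX SC TX TC : ℝ → ℝ)
    (hfX_int : Integrable fX) (hfX_one : ∫ x, fX x = 1)
    (hfC_int : Integrable fC) (hfC_one : ∫ c, fC c = 1)
    (hgX_int : Integrable gX) (hgX_nonneg : ∀ x, 0 ≤ gX x) (hgX_one : ∫ x, gX x = 1)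
    (hgC_int : Integrable gC) (hgC_nonneg : ∀ c, 0 ≤ gC c) (hgC_one : ∫ c, gC c = 1)
    (hSX : ∀ t, SX t = ∫ x in Ioi t, fX x)
    (hSC : ∀ t, SC t = ∫ c in Ioi t, fC c)
    (hTX : ∀ t, TX t = ∫ x in Ioi t, gX x)
    (hTC : ∀ t, TC t = ∫ c in Ioi t, gC c)
    (hSX_pos : ∀ t, 0 < SX t) (hSC_pos : ∀ t, 0 < SC t)
    (hTX_pos : ∀ t, 0 < TX t) (hTC_pos : ∀ t, 0 < TC t)
    (h1 : ∀ x, fX x * SC x = gX x * TC x)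
    (h2 : ∀ c, SX c * fC c = TX c * gC c)
    (h3 : ∀ t, SX t * SC t = TX t * TC t) :
    (∀ x, fX x = gX x) ∧ (∀ c, fC c = gC c) := by
  have hX_hazard : ∀ x, fX x * TX x = gX x * SX x := fun x ↦
    hazard_eq_of_mul_eq_mul (hSC_pos x).ne' (hTC_pos x).ne' (h1 x) (h3 x)
  have hC_hazard : ∀ c, fC c * TC c = gC c * SC c := fun c ↦
    hazard_eq_of_mul_eq_mul (hSX_pos c).ne' (hTX_pos c).ne'
      (by rw [mul_comm, h2, mul_comm]) (by rw [mul_comm, h3, mul_comm])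
  have hX : SX = TX := survival_eq_of_hazard_eq hfX_int hgX_int (ae_of_all _ hgX_nonneg)
    (hfX_one.trans hgX_one.symm) hSX hTX hTX_pos (ae_of_all _ hX_hazard)
  have hC : SC = TC := survival_eq_of_hazard_eq hfC_int hgC_int (ae_of_all _ hgC_nonneg)
    (hfC_one.trans hgC_one.symm) hSC hTC hTC_pos (ae_of_all _ hC_hazard)
  exact ⟨fun x ↦ mul_right_cancel₀ (hTX_pos x).ne' (by rw [hX_hazard, hX]),
    fun c ↦ mul_right_cancel₀ (hTC_pos c).ne' (by rw [hC_hazard, hC])⟩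

theorem stmt_4 (fX fC gX gC SX SC TX TC : ℝ → ℝ)
    (hfX_int : Integrable fX) (hfX_nonneg : ∀ x, 0 ≤ fX x) (hfX_one : ∫ x, fX x = 1)
    (hfC_int : Integrable fC) (hfC_nonneg : ∀ c, 0 ≤ fC c) (hfC_one : ∫ c, fC c = 1)
    (hgX_int : Integrable gX) (hgX_nonneg : ∀ x, 0 ≤ gX x) (hgX_one : ∫ x, gX x = 1)
    (hgC_int : Integrable gC) (hgC_nonneg : ∀ c, 0 ≤ gC c) (hgC_one : ∫ c, gC c = 1)
    (hSX : ∀ t, SX t = ∫ x in Ioi t, fX x)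
    (hSC : ∀ t, SC t = ∫ c in Ioi t, fC c)
    (hTX : ∀ t, TX t = ∫ x in Ioi t, gX x)
    (hTC : ∀ t, TC t = ∫ c in Ioi t, gC c)
    (hSX_pos : ∀ t, 0 < SX t) (hSC_pos : ∀ t, 0 < SC t)
    (hTX_pos : ∀ t, 0 < TX t) (hTC_pos : ∀ t, 0 < TC t)
    (h1 : ∀ x, fX x * SC x = gX x * TC x)
    (h2 : ∀ c, SX c * fC c = TX c * gC c)
    (h3 : ∀ t, SX t * SC t = TX t * TC t) :
    (∀ x, fX x = gX x) ∧ (∀ c, fC c = gC c) :=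
  stmt_4_general fX fC gX gC SX SC TX TC hfX_int hfX_one hfC_int hfC_one hgX_int hgX_nonneg hgX_one
    hgC_int hgC_nonneg hgC_one hSX hSC hTX hTC hSX_pos hSC_pos hTX_pos hTC_pos h1 h2 h3
end

section
/- Let X, C be independent random variables with densities η₁, η₂ on ℝ, both positive. Let a₁, a₂ : ℝ → ℝ be bounded measurable functions with E[a₁(X)] = 0 and E[a₂(C)] = 0. Define S₁ = Δ·a₁(W) + (1-Δ)·E[1{X > W} a₁(X) | W] / E[1{X > W} | W] and S₂ = Δ·E[1{C ≥ W} a₂(C) | W] / E[1{C ≥ W} | W] + (1-Δ)·a₂(W), where W = min(X,C) and Δ = 1{X ≤ C} (conditioning uses the relevant distribution of X or C only, with the observed value of W plugged in). Then E[S₁ · S₂] = 0. -/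
/-! Split the `(x, c)`-plane at the diagonal. On `{x ≤ c}` the conditional mean
`E[a₂(C) | C ≥ x]`, integrated in `c` over `{c ≥ x}` against `η₂`, gives back `∫_{c ≥ x} a₂ η₂`;
symmetrically on `{c < x}`. So `E[S₁ S₂]` is the integral of `a₁(x) η₁(x) a₂(c) η₂(c)` over the
two halves of the plane, that is `E[a₁(X)] E[a₂(C)] = 0`. -/

open MeasureTheory Set

namespace MeasureTheory

section Sections

variable {α β E : Type*} [MeasurableSpace α] [MeasurableSpace β]
  [NormedAddCommGroup E] [NormedSpace ℝ E] {ν : Measure β} [SFinite ν]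

theorem AEStronglyMeasurable.setIntegral_preimage_prodMk {S : Set (α × β)}
    (hS : MeasurableSet S) {h : β → E} (hh : AEStronglyMeasurable h ν) :
    StronglyMeasurable fun x => ∫ y in Prod.mk x ⁻¹' S, h y ∂ν := by
  have hF : StronglyMeasurable (S.indicator fun p => hh.mk h p.2) :=
    (hh.stronglyMeasurable_mk.comp_measurable measurable_snd).indicator hS
  convert hF.integral_prod_right' (ν := ν) using 2 with x
  rw [integral_congr_ae (ae_restrict_of_ae hh.ae_eq_mk),
    ← integral_indicator (measurable_prodMk_left hS)]
  rfl

theorem measurable_setIntegral_mul_div_setIntegral {S : Set (α × β)} (hS : MeasurableSet S)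
    {a η : β → ℝ} (ha : AEStronglyMeasurable a ν) (hη : AEStronglyMeasurable η ν) :
    Measurable fun x =>
      (∫ y in Prod.mk x ⁻¹' S, a y * η y ∂ν) / ∫ y in Prod.mk x ⁻¹' S, η y ∂ν :=
  ((ha.mul hη).setIntegral_preimage_prodMk hS).measurable.div
    (hη.setIntegral_preimage_prodMk hS).measurable

end Sections

section Diagonal

variable {α E : Type*} [MeasurableSpace α] [TopologicalSpace α] [LinearOrder α]
  [OrderClosedTopology α] [SecondCountableTopology α] [OpensMeasurableSpace α]
  [NormedAddCommGroup E] [NormedSpace ℝ E] {μ ν : Measure α}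

theorem integrable_ite_mul_prod {u v η₁ η₂ : α → ℝ} {M : ℝ} (hu : Measurable u)
    (hv : Measurable v) (hu_bdd : ∀ x, |u x| ≤ M) (hv_bdd : ∀ c, |v c| ≤ M)
    (hη₁ : Integrable η₁ μ) (hη₂ : Integrable η₂ ν) :
    Integrable (fun p : α × α => (if p.1 ≤ p.2 then u p.1 else v p.2) * (η₁ p.1 * η₂ p.2))
      (μ.prod ν) := by
  refine (hη₁.mul_prod hη₂).bdd_mul (c := M) ?_ (Filter.Eventually.of_forall fun p => ?_)
  · exact (Measurable.ite (measurableSet_le measurable_fst measurable_snd)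
      (hu.comp measurable_fst) (hv.comp measurable_snd)).aestronglyMeasurable
  · rw [Real.norm_eq_abs]
    split_ifs
    exacts [hu_bdd _, hv_bdd _]

variable [SFinite μ] [SFinite ν]

theorem integral_prod_eq_integral_Ici_add_integral_Ioi {F : α × α → E}
    (hF : Integrable F (μ.prod ν)) :
    ∫ p, F p ∂(μ.prod ν) =
      ∫ x, (∫ c in Ici x, F (x, c) ∂ν) ∂μ + ∫ c, (∫ x in Ioi c, F (x, c) ∂μ) ∂ν := by
  have hD : MeasurableSet {p : α × α | p.1 ≤ p.2} :=
    measurableSet_le measurable_fst measurable_snd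
  rw [← integral_add_compl hD hF, ← integral_indicator hD, ← integral_indicator hD.compl,
    integral_prod _ (hF.indicator hD), integral_prod_symm _ (hF.indicator hD.compl)]
  congr 1
  · congr 1 with x
    rw [← integral_indicator measurableSet_Ici]
    rfl
  · congr 1 with c
    rw [← integral_indicator measurableSet_Ioi]
    congr 1 with x
    simp only [indicator, mem_compl_iff, mem_ofPred_eq, not_le, mem_Ioi]

theorem integral_mul_setIntegral_Ici_add_integral_mul_setIntegral_Ioi {f g : α → ℝ}
    (hf : Integrable f μ) (hg : Integrable g ν) :
    ∫ x, f x * (∫ c in Ici x, g c ∂ν) ∂μ + ∫ c, g c * (∫ x in Ioi c, f x ∂μ) ∂ν =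
      (∫ x, f x ∂μ) * ∫ c, g c ∂ν := by
  rw [← integral_prod_mul, integral_prod_eq_integral_Ici_add_integral_Ioi (hf.mul_prod hg)]
  simp only [integral_const_mul, integral_mul_const, mul_comm]

theorem integral_integral_ite_mul_eq_mul {a₁ a₂ g₁ g₂ η₁ η₂ : α → ℝ}
    (hK : Integrable (fun p : α × α =>
      (if p.1 ≤ p.2 then a₁ p.1 * g₂ p.1 else g₁ p.2 * a₂ p.2) * (η₁ p.1 * η₂ p.2)) (μ.prod ν))
    (ha₁ : Integrable (fun x => a₁ x * η₁ x) μ) (ha₂ : Integrable (fun c => a₂ c * η₂ c) ν)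
    (hg₁ : ∀ c, g₁ c * ∫ x in Ioi c, η₁ x ∂μ = ∫ x in Ioi c, a₁ x * η₁ x ∂μ)
    (hg₂ : ∀ x, g₂ x * ∫ c in Ici x, η₂ c ∂ν = ∫ c in Ici x, a₂ c * η₂ c ∂ν) :
    ∫ x, ∫ c, (if x ≤ c then a₁ x * g₂ x else g₁ c * a₂ c) * (η₁ x * η₂ c) ∂ν ∂μ =
      (∫ x, a₁ x * η₁ x ∂μ) * ∫ c, a₂ c * η₂ c ∂ν := by
  have hIci : ∀ x, ∫ c in Ici x, (if x ≤ c then a₁ x * g₂ x else g₁ c * a₂ c) *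
      (η₁ x * η₂ c) ∂ν = a₁ x * η₁ x * ∫ c in Ici x, a₂ c * η₂ c ∂ν := by
    intro x
    calc _ = ∫ c in Ici x, a₁ x * η₁ x * g₂ x * η₂ c ∂ν :=
          setIntegral_congr_fun measurableSet_Ici fun c hc => by
            simp only [if_pos (show x ≤ c from hc)]; ring
      _ = _ := by rw [integral_const_mul, mul_assoc, hg₂]
  have hIoi : ∀ c, ∫ x in Ioi c, (if x ≤ c then a₁ x * g₂ x else g₁ c * a₂ c) *
      (η₁ x * η₂ c) ∂μ = a₂ c * η₂ c * ∫ x in Ioi c, a₁ x * η₁ x ∂μ := by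
    intro c
    calc _ = ∫ x in Ioi c, a₂ c * η₂ c * g₁ c * η₁ x ∂μ :=
          setIntegral_congr_fun measurableSet_Ioi fun x hx => by
            simp only [if_neg (not_le.2 (show c < x from hx))]; ring
      _ = _ := by rw [integral_const_mul, mul_assoc, hg₁]
  calc _ = ∫ p, (if p.1 ≤ p.2 then a₁ p.1 * g₂ p.1 else g₁ p.2 * a₂ p.2) *
        (η₁ p.1 * η₂ p.2) ∂(μ.prod ν) := (integral_prod _ hK).symm
    _ = (∫ x, a₁ x * η₁ x * ∫ c in Ici x, a₂ c * η₂ c ∂ν ∂μ) +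
          ∫ c, a₂ c * η₂ c * ∫ x in Ioi c, a₁ x * η₁ x ∂μ ∂ν := by
        rw [integral_prod_eq_integral_Ici_add_integral_Ioi hK]; simp only [hIci, hIoi]
    _ = _ := integral_mul_setIntegral_Ici_add_integral_mul_setIntegral_Ioi ha₁ ha₂

end Diagonal

theorem abs_integral_mul_div_integral_le {α : Type*} [MeasurableSpace α] {μ : Measure α}
    {a η : α → ℝ} {M : ℝ} (ha : ∀ x, |a x| ≤ M) (hη_nonneg : ∀ x, 0 ≤ η x)
    (hη : Integrable η μ) (hpos : 0 < ∫ x, η x ∂μ) :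
    |(∫ x, a x * η x ∂μ) / ∫ x, η x ∂μ| ≤ M := by
  rw [abs_div, abs_of_pos hpos, div_le_iff₀ hpos, ← integral_const_mul, ← Real.norm_eq_abs]
  refine norm_integral_le_of_norm_le (hη.const_mul M) (Filter.Eventually.of_forall fun x => ?_)
  rw [Real.norm_eq_abs, abs_mul, abs_of_nonneg (hη_nonneg x)]
  exact mul_le_mul_of_nonneg_right (ha x) (hη_nonneg x)

end MeasureTheory

theorem stmt_5_general (η₁ η₂ a₁ a₂ : ℝ → ℝ)
    (hη₁_int : Integrable η₁) (hη₁_pos : ∀ x, 0 < η₁ x)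
    (hη₂_int : Integrable η₂) (hη₂_pos : ∀ c, 0 < η₂ c)
    (ha₁_meas : Measurable a₁) (ha₁_bdd : ∃ M, ∀ x, |a₁ x| ≤ M)
    (ha₁_mean : ∫ x, a₁ x * η₁ x = 0)
    (ha₂_meas : Measurable a₂) (ha₂_bdd : ∃ M, ∀ c, |a₂ c| ≤ M)
    (hden₁ : ∀ w : ℝ, 0 < ∫ x in Ioi w, η₁ x)
    (hden₂ : ∀ w : ℝ, 0 < ∫ c in Ici w, η₂ c) :
    ∫ x, ∫ c,
      (if x ≤ c then
         a₁ x * ((∫ u in Ici x, a₂ u * η₂ u) / (∫ u in Ici x, η₂ u))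
       else
         ((∫ u in Ioi c, a₁ u * η₁ u) / (∫ u in Ioi c, η₁ u)) * a₂ c)
      * (η₁ x * η₂ c) = 0 := by
  obtain ⟨M₁, hM₁⟩ := ha₁_bdd
  obtain ⟨M₂, hM₂⟩ := ha₂_bdd
  set g₁ : ℝ → ℝ := fun c => (∫ u in Ioi c, a₁ u * η₁ u) / ∫ u in Ioi c, η₁ u
  set g₂ : ℝ → ℝ := fun x => (∫ u in Ici x, a₂ u * η₂ u) / ∫ u in Ici x, η₂ u
  have hM₁_nonneg : 0 ≤ M₁ := (abs_nonneg _).trans (hM₁ 0)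
  have hg₁ : ∀ c, |g₁ c| ≤ M₁ := fun c =>
    abs_integral_mul_div_integral_le hM₁ (fun x => (hη₁_pos x).le) hη₁_int.integrableOn (hden₁ c)
  have hg₂ : ∀ x, |g₂ x| ≤ M₂ := fun x =>
    abs_integral_mul_div_integral_le hM₂ (fun c => (hη₂_pos c).le) hη₂_int.integrableOn (hden₂ x)
  have ia₁ : Integrable fun u => a₁ u * η₁ u :=
    hη₁_int.bdd_mul ha₁_meas.aestronglyMeasurable (Filter.Eventually.of_forall hM₁)
  have ia₂ : Integrable fun u => a₂ u * η₂ u :=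
    hη₂_int.bdd_mul ha₂_meas.aestronglyMeasurable (Filter.Eventually.of_forall hM₂)
  -- `Ioi c` and `Ici x` are, definitionally, sections of `{p | p.1 < p.2}` and `{p | p.1 ≤ p.2}`.
  have hg₁_meas : Measurable g₁ := measurable_setIntegral_mul_div_setIntegral
    (measurableSet_lt measurable_fst measurable_snd) ha₁_meas.aestronglyMeasurable hη₁_int.1
  have hg₂_meas : Measurable g₂ := measurable_setIntegral_mul_div_setIntegral
    (measurableSet_le measurable_fst measurable_snd) ha₂_meas.aestronglyMeasurable hη₂_int.1
  have hK := integrable_ite_mul_prod (ha₁_meas.mul hg₂_meas) (hg₁_meas.mul ha₂_meas)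
    (fun x => (abs_mul _ _).trans_le (mul_le_mul (hM₁ x) (hg₂ x) (abs_nonneg _) hM₁_nonneg))
    (fun c => (abs_mul _ _).trans_le (mul_le_mul (hg₁ c) (hM₂ c) (abs_nonneg _) hM₁_nonneg))
    hη₁_int hη₂_int
  rw [integral_integral_ite_mul_eq_mul hK ia₁ ia₂ (fun c => div_mul_cancel₀ _ (hden₁ c).ne')
    (fun x => div_mul_cancel₀ _ (hden₂ x).ne'), ha₁_mean, zero_mul]

theorem stmt_5 (η₁ η₂ a₁ a₂ : ℝ → ℝ)
    (hη₁_int : Integrable η₁) (hη₁_pos : ∀ x, 0 < η₁ x) (hη₁_one : ∫ x, η₁ x = 1)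
    (hη₂_int : Integrable η₂) (hη₂_pos : ∀ c, 0 < η₂ c) (hη₂_one : ∫ c, η₂ c = 1)
    (ha₁_meas : Measurable a₁) (ha₁_bdd : ∃ M, ∀ x, |a₁ x| ≤ M)
    (ha₁_mean : ∫ x, a₁ x * η₁ x = 0)
    (ha₂_meas : Measurable a₂) (ha₂_bdd : ∃ M, ∀ c, |a₂ c| ≤ M)
    (ha₂_mean : ∫ c, a₂ c * η₂ c = 0)
    (hden₁ : ∀ w : ℝ, 0 < ∫ x in Ioi w, η₁ x)
    (hden₂ : ∀ w : ℝ, 0 < ∫ c in Ici w, η₂ c) :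
    ∫ x, ∫ c,
      (if x ≤ c then
         a₁ x * ((∫ u in Ici x, a₂ u * η₂ u) / (∫ u in Ici x, η₂ u))
       else
         ((∫ u in Ioi c, a₁ u * η₁ u) / (∫ u in Ioi c, η₁ u)) * a₂ c)
      * (η₁ x * η₂ c) = 0 :=
  stmt_5_general η₁ η₂ a₁ a₂ hη₁_int hη₁_pos hη₂_int hη₂_pos ha₁_meas ha₁_bdd ha₁_mean ha₂_meas
    ha₂_bdd hden₁ hden₂
end

section
/- Let X, C be independent with densities η₁, η₂, W = min(X,C), Δ = 1{X ≤ C}. Suppose g₁, g₀ : ℝ → ℝ are bounded measurable and satisfy, for almost every x, ∫ [1{x ≤ c} g₁(x) + 1{x > c} g₀(c)] η₂(c) dc = 0. Then E[Δ g₁(W) + (1-Δ) g₀(W)] = 0. -/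
/-! Writing the expectation as an iterated integral over `(C, X)` and integrating over `C`
first (Fubini), the inner integral at `X = x` is `η₁ x` times the conditional expectation
given `X = x`, which vanishes for almost every `x`. -/

open MeasureTheory

section

variable {α β : Type*} [MeasurableSpace α] [MeasurableSpace β]
  {μ : Measure α} {ν : Measure β}

theorem Integrable.bdd_mul_mul_prod {F : α × β → ℝ} {f : α → ℝ} {g : β → ℝ}
    (hF : AEStronglyMeasurable F (μ.prod ν)) (hF_bdd : ∃ C, ∀ z, |F z| ≤ C)
    (hf : Integrable f μ) (hg : Integrable g ν) :
    Integrable (fun z => F z * (g z.2 * f z.1)) (μ.prod ν) := by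
  obtain ⟨C, hC⟩ := hF_bdd
  have hfg : Integrable (fun z : α × β => g z.2 * f z.1) (μ.prod ν) := by
    simpa only [mul_comm] using hf.mul_prod hg
  exact hfg.bdd_mul hF (.of_forall hC)

theorem integral_integral_mul_eq_zero_of_ae_integral_mul_eq_zero [SFinite μ] [SFinite ν]
    {F : α → β → ℝ} {f : α → ℝ} {g : β → ℝ}
    (hint : Integrable (fun z : α × β => F z.1 z.2 * (g z.2 * f z.1)) (μ.prod ν))
    (hcond : ∀ᵐ b ∂ν, ∫ a, F a b * f a ∂μ = 0) :
    ∫ a, ∫ b, F a b * (g b * f a) ∂ν ∂μ = 0 := by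
  rw [integral_integral_swap hint]
  have hinner : ∀ᵐ b ∂ν, ∫ a, F a b * (g b * f a) ∂μ = 0 := by
    filter_upwards [hcond] with b hb
    simp_rw [mul_left_comm _ (g b)]
    rw [integral_const_mul, hb, mul_zero]
  rw [integral_congr_ae hinner, integral_zero]

end

theorem stmt_10_general (η₁ η₂ g₁ g₀ : ℝ → ℝ)
    (hη₁_int : Integrable η₁)
    (hη₂_int : Integrable η₂)
    (hg₁_meas : Measurable g₁) (hg₁_bdd : ∃ M, ∀ w, |g₁ w| ≤ M)
    (hg₀_meas : Measurable g₀) (hg₀_bdd : ∃ M, ∀ w, |g₀ w| ≤ M)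
    (hcond : ∀ᵐ x ∂volume, ∫ c, (if x ≤ c then g₁ x else g₀ c) * η₂ c = 0) :
    ∫ c, ∫ x, (if x ≤ c then g₁ x else g₀ c) * (η₁ x * η₂ c) = 0 := by
  obtain ⟨M₁, hM₁⟩ := hg₁_bdd
  obtain ⟨M₀, hM₀⟩ := hg₀_bdd
  have hmeas : Measurable fun z : ℝ × ℝ => if z.2 ≤ z.1 then g₁ z.2 else g₀ z.1 :=
    Measurable.ite (measurableSet_le measurable_snd measurable_fst)
      (hg₁_meas.comp measurable_snd) (hg₀_meas.comp measurable_fst)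
  have hbdd : ∃ C, ∀ z : ℝ × ℝ, |if z.2 ≤ z.1 then g₁ z.2 else g₀ z.1| ≤ C :=
    ⟨max M₁ M₀, fun z => by
      split_ifs
      exacts [le_max_of_le_left (hM₁ _), le_max_of_le_right (hM₀ _)]⟩
  exact integral_integral_mul_eq_zero_of_ae_integral_mul_eq_zero
    (Integrable.bdd_mul_mul_prod hmeas.aestronglyMeasurable hbdd hη₂_int hη₁_int) hcond

theorem stmt_10 (η₁ η₂ g₁ g₀ : ℝ → ℝ)
    (hη₁_int : Integrable η₁) (hη₁_nonneg : ∀ x, 0 ≤ η₁ x) (hη₁_one : ∫ x, η₁ x = 1)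
    (hη₂_int : Integrable η₂) (hη₂_nonneg : ∀ c, 0 ≤ η₂ c) (hη₂_one : ∫ c, η₂ c = 1)
    (hg₁_meas : Measurable g₁) (hg₁_bdd : ∃ M, ∀ w, |g₁ w| ≤ M)
    (hg₀_meas : Measurable g₀) (hg₀_bdd : ∃ M, ∀ w, |g₀ w| ≤ M)
    (hcond : ∀ᵐ x ∂volume, ∫ c, (if x ≤ c then g₁ x else g₀ c) * η₂ c = 0) :
    ∫ c, ∫ x, (if x ≤ c then g₁ x else g₀ c) * (η₁ x * η₂ c) = 0 :=
  stmt_10_general η₁ η₂ g₁ g₀ hη₁_int hη₂_int hg₁_meas hg₁_bdd hg₀_meas hg₀_bdd hcond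
end

section
/- Let μ and ν be probability measures on ℝ with positive densities η₁, η₂. Suppose b : ℝ × {0,1} → ℝ is bounded measurable and satisfies: for ν-almost-every x, ∫ [1{x ≤ c} b(x, 1) + 1{x > c} b(c, 0)] η₂(c) dc = 0 (conditional mean zero given X = x under the censoring distribution). Then, with X ~ η₁ and C ~ η₂ independent, W = min(X,C), Δ = 1{X ≤ C}, we have E[b(W, Δ)] = 0. -/
/-!
Fubini: integrate first over the censoring time `C` for fixed `X = x`. The inner integral is
`η₁ x` times the conditional mean of `b(W, Δ)` given `X = x`, which vanishes for a.e. `x`;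
boundedness of `b` against the product density justifies the exchange of integrals.
-/

open MeasureTheory

/-- `b(W, Δ)` evaluated at `W = min x c`, `Δ = 1{x ≤ c}`. -/
noncomputable def censoredScore (b : ℝ → Bool → ℝ) (x c : ℝ) : ℝ :=
  if x ≤ c then b x true else b c false

theorem measurable_censoredScore {b : ℝ → Bool → ℝ} (hb : ∀ δ, Measurable fun w => b w δ) :
    Measurable fun p : ℝ × ℝ => censoredScore b p.1 p.2 :=
  Measurable.ite (measurableSet_le measurable_fst measurable_snd)
    ((hb true).comp measurable_fst) ((hb false).comp measurable_snd)

theorem abs_censoredScore_le {b : ℝ → Bool → ℝ} {M : ℝ} (hM : ∀ w δ, |b w δ| ≤ M) (x c : ℝ) :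
    |censoredScore b x c| ≤ M := by
  unfold censoredScore
  split_ifs <;> exact hM _ _

section Product

variable {α β : Type*} [MeasurableSpace α] [MeasurableSpace β] {μ : Measure α} {ν : Measure β}

theorem Integrable.bdd_mul_mul_prod_s12 [SFinite ν] {g : α → β → ℝ} {f : α → ℝ} {h : β → ℝ} {M : ℝ}
    (hg : AEStronglyMeasurable (Function.uncurry g) (μ.prod ν)) (hgM : ∀ x y, ‖g x y‖ ≤ M)
    (hf : Integrable f μ) (hh : Integrable h ν) :
    Integrable (Function.uncurry fun x y => g x y * (f x * h y)) (μ.prod ν) :=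
  (hf.mul_prod hh).bdd_mul hg (.of_forall fun p => hgM p.1 p.2)

theorem integral_integral_swap_eq_zero_of_ae [SFinite μ] [SFinite ν] {f : α → β → ℝ}
    (hf : Integrable (Function.uncurry f) (μ.prod ν)) (h0 : ∀ᵐ x ∂μ, ∫ y, f x y ∂ν = 0) :
    ∫ y, ∫ x, f x y ∂μ ∂ν = 0 := by
  rw [← integral_integral_swap hf]
  exact integral_eq_zero_of_ae h0

end Product

theorem stmt_12_general (η₁ η₂ : ℝ → ℝ) (b : ℝ → Bool → ℝ)
    (hη₁_int : Integrable η₁)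
    (hη₂_int : Integrable η₂)
    (hb_meas : ∀ δ, Measurable (fun w => b w δ))
    (hb_bdd : ∃ M, ∀ w δ, |b w δ| ≤ M)
    (hcond : ∀ᵐ x ∂volume,
      ∫ c, (if x ≤ c then b x true else b c false) * η₂ c = 0) :
    ∫ c, ∫ x, (if x ≤ c then b x true else b c false) * (η₁ x * η₂ c) = 0 := by
  obtain ⟨M, hM⟩ := hb_bdd
  have hint : Integrable (Function.uncurry fun x c => censoredScore b x c * (η₁ x * η₂ c))
      (volume.prod volume) :=
    Integrable.bdd_mul_mul_prod_s12 (measurable_censoredScore hb_meas).aestronglyMeasurable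
      (abs_censoredScore_le hM) hη₁_int hη₂_int
  refine integral_integral_swap_eq_zero_of_ae hint ?_
  filter_upwards [hcond] with x hx
  simp_rw [mul_left_comm _ (η₁ x)]
  rw [integral_const_mul, hx, mul_zero]

theorem stmt_12 (η₁ η₂ : ℝ → ℝ) (b : ℝ → Bool → ℝ)
    (hη₁_int : Integrable η₁) (hη₁_pos : ∀ x, 0 < η₁ x) (hη₁_one : ∫ x, η₁ x = 1)
    (hη₂_int : Integrable η₂) (hη₂_pos : ∀ c, 0 < η₂ c) (hη₂_one : ∫ c, η₂ c = 1)
    (hb_meas : ∀ δ, Measurable (fun w => b w δ))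
    (hb_bdd : ∃ M, ∀ w δ, |b w δ| ≤ M)
    (hcond : ∀ᵐ x ∂volume,
      ∫ c, (if x ≤ c then b x true else b c false) * η₂ c = 0) :
    ∫ c, ∫ x, (if x ≤ c then b x true else b c false) * (η₁ x * η₂ c) = 0 :=
  stmt_12_general η₁ η₂ b hη₁_int hη₂_int hb_meas hb_bdd hcond
end

section
/- Let f : ℝ → ℝ be a positive density and g : ℝ → ℝ bounded measurable with ∫ g(x) f(x) dx = 0. Define for each w the 'censored conditional mean' m(w) = [∫_w^∞ g(x) f(x) dx] / [∫_w^∞ f(x) dx], assuming ∫_w^∞ f(x) dx > 0 for all w. Then for any density h on ℝ: ∫ g(w) f(w) [∫_w^∞ h(c) dc] dw + ∫ m(w) [∫_w^∞ f(x) dx] h(w) dw = 0. -/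
/-!
Write `G(w) = ∫_{x > w} g f`. The ratio `m(w)` times the survival function is just `G(w)`, so the
second term is `∫ G h`. By Fubini over the region `{w < c}`, the first term is
`∫ (∫_{x < c} g f) h(c) dc`.
Since `∫ g f = 0` and points are null, `∫_{x < c} g f = -G(c)`, and the two terms cancel.
-/

open MeasureTheory Set

section Fubini

variable {μ ν : Measure ℝ} {φ ψ : ℝ → ℝ}

lemma integrable_indicator_lt_mul_prod (hφ : Integrable φ μ) (hψ : Integrable ψ ν) :
    Integrable ({p : ℝ × ℝ | p.1 < p.2}.indicator fun p => φ p.1 * ψ p.2) (μ.prod ν) :=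
  (hφ.mul_prod hψ).indicator (measurableSet_lt measurable_fst measurable_snd)

lemma integral_mul_setIntegral_Ioi [SFinite μ] [SFinite ν] (hφ : Integrable φ μ)
    (hψ : Integrable ψ ν) :
    ∫ w, φ w * ∫ c in Ioi w, ψ c ∂ν ∂μ = ∫ c, (∫ w in Iio c, φ w ∂μ) * ψ c ∂ν := by
  calc ∫ w, φ w * ∫ c in Ioi w, ψ c ∂ν ∂μ
      = ∫ w, ∫ c, {p : ℝ × ℝ | p.1 < p.2}.indicator (fun p => φ p.1 * ψ p.2) (w, c) ∂ν ∂μ := by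
        refine integral_congr_ae (Filter.Eventually.of_forall fun w => ?_)
        simp only [← integral_const_mul, ← integral_indicator measurableSet_Ioi]
        congr 1 with c
        simp only [indicator_apply, mem_Ioi, mem_ofPred_eq, mul_ite, mul_zero]
    _ = ∫ c, ∫ w, {p : ℝ × ℝ | p.1 < p.2}.indicator (fun p => φ p.1 * ψ p.2) (w, c) ∂μ ∂ν :=
        integral_integral_swap (integrable_indicator_lt_mul_prod hφ hψ)
    _ = ∫ c, (∫ w in Iio c, φ w ∂μ) * ψ c ∂ν := by
        refine integral_congr_ae (Filter.Eventually.of_forall fun c => ?_)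
        simp only [← integral_mul_const, ← integral_indicator measurableSet_Iio]
        congr 1 with w
        simp only [indicator_apply, mem_Iio, mem_ofPred_eq, ite_mul, zero_mul]

end Fubini

lemma setIntegral_Ioi_eq_neg_setIntegral_Iio {μ : Measure ℝ} [NullSingletonClass μ] {φ : ℝ → ℝ}
    (hφ : Integrable φ μ) (hφ_zero : ∫ x, φ x ∂μ = 0) (c : ℝ) :
    ∫ x in Ioi c, φ x ∂μ = -∫ x in Iio c, φ x ∂μ := by
  have := intervalIntegral.integral_Iic_add_Ioi hφ.integrableOn hφ.integrableOn (b := c)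
  rw [integral_Iic_eq_integral_Iio, hφ_zero] at this
  linarith

lemma integral_mul_setIntegral_Ioi_add_integral_setIntegral_Ioi_mul
    {μ ν : Measure ℝ} [SFinite μ] [NullSingletonClass μ] [SFinite ν] {φ ψ : ℝ → ℝ}
    (hφ : Integrable φ μ) (hφ_zero : ∫ x, φ x ∂μ = 0) (hψ : Integrable ψ ν) :
    (∫ w, φ w * ∫ c in Ioi w, ψ c ∂ν ∂μ) + ∫ w, (∫ x in Ioi w, φ x ∂μ) * ψ w ∂ν = 0 := by
  simp only [integral_mul_setIntegral_Ioi hφ hψ,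
    setIntegral_Ioi_eq_neg_setIntegral_Iio hφ hφ_zero, neg_mul, integral_neg, add_neg_cancel]

theorem stmt_13_general (f g h : ℝ → ℝ)
    (hf_int : Integrable f)
    (hg_meas : Measurable g) (hg_bdd : ∃ M, ∀ x, |g x| ≤ M)
    (hg_mean : ∫ x, g x * f x = 0)
    (hsurv : ∀ w : ℝ, 0 < ∫ x in Ioi w, f x)
    (hh_int : Integrable h) :
    (∫ w, g w * f w * (∫ c in Ioi w, h c))
      + (∫ w, ((∫ x in Ioi w, g x * f x) / (∫ x in Ioi w, f x))
          * (∫ x in Ioi w, f x) * h w) = 0 := by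
  obtain ⟨M, hM⟩ := hg_bdd
  have hgf : Integrable (fun x => g x * f x) :=
    hf_int.bdd_mul hg_meas.aestronglyMeasurable (.of_forall fun x => (hM x :))
  have hm : ∀ w, (∫ x in Ioi w, g x * f x) / (∫ x in Ioi w, f x) * (∫ x in Ioi w, f x)
      = ∫ x in Ioi w, g x * f x := fun w => div_mul_cancel₀ _ (hsurv w).ne'
  simp only [hm]
  exact integral_mul_setIntegral_Ioi_add_integral_setIntegral_Ioi_mul hgf hg_mean hh_int

theorem stmt_13 (f g h : ℝ → ℝ)
    (hf_int : Integrable f) (hf_pos : ∀ x, 0 < f x) (hf_one : ∫ x, f x = 1)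
    (hg_meas : Measurable g) (hg_bdd : ∃ M, ∀ x, |g x| ≤ M)
    (hg_mean : ∫ x, g x * f x = 0)
    (hsurv : ∀ w : ℝ, 0 < ∫ x in Ioi w, f x)
    (hh_int : Integrable h) (hh_nonneg : ∀ c, 0 ≤ h c) (hh_one : ∫ c, h c = 1) :
    (∫ w, g w * f w * (∫ c in Ioi w, h c))
      + (∫ w, ((∫ x in Ioi w, g x * f x) / (∫ x in Ioi w, f x))
          * (∫ x in Ioi w, f x) * h w) = 0 :=
  stmt_13_general f g h hf_int hg_meas hg_bdd hg_mean hsurv hh_int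
end

section
/- Let X, C be independent with positive densities η₁, η₂ and suppose Y is a random variable with conditional density f_{Y|X}(y, x) given X = x, with C independent of (Y, X). Let s : ℝ × ℝ → ℝ be bounded measurable with ∫ s(y, x) f_{Y|X}(y, x) dy = 0 for all x (a conditional score). Define the observed-data score S(y, w, δ) = δ·s(y, w) + (1-δ)·[∫ 1{x > w} s(y, x) f_{Y|X}(y,x) η₁(x) dx] / [∫ 1{x > w} f_{Y|X}(y,x) η₁(x) dx], where W = min(X, C), Δ = 1{X ≤ C}. Then E[S(Y, W, Δ)] = 0. -/
/-!
Fix `y` and write `φ x = f(y, x) η₁(x)`. Integrating over `x` first, for each censoring time `c`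
the censored part contributes the `φ`-tail average of `s(y, ·)` over `(c, ∞)` times `∫_{x > c} φ`,
which is `∫_{x > c} s(y, ·) φ`; with the uncensored part `∫_{x ≤ c} s(y, ·) φ` this gives
`η₂(c) ∫ s(y, ·) φ`. Hence the whole integral is `(∫ η₂) ∫∫ s f η₁`, and integrating `y` out first
the score identity makes it vanish.
-/

open MeasureTheory Set

lemma continuous_integral_Ioi {E : Type*} [NormedAddCommGroup E] [NormedSpace ℝ E]
    {μ : Measure ℝ} [NullSingletonClass μ] {h : ℝ → E} (hh : Integrable h μ) :
    Continuous fun c => ∫ u in Ioi c, h u ∂μ :=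
  continuous_iff_continuousAt.2 fun c =>
    (hh.integrableOn (s := Ioi (c - 1))).continuousOn_Ici_primitive_Ioi.continuousAt
      (Ici_mem_nhds (by linarith))

lemma abs_integral_mul_le_of_abs_le {α : Type*} [MeasurableSpace α] {μ : Measure α}
    {g φ : α → ℝ} {M : ℝ} (hφ : Integrable φ μ) (hφ0 : ∀ x, 0 ≤ φ x) (hgM : ∀ x, |g x| ≤ M) :
    |∫ x, g x * φ x ∂μ| ≤ M * ∫ x, φ x ∂μ :=
  calc |∫ x, g x * φ x ∂μ| ≤ ∫ x, |g x * φ x| ∂μ := abs_integral_le_integral_abs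
    _ ≤ ∫ x, M * φ x ∂μ :=
        integral_mono_of_nonneg (ae_of_all _ fun x => abs_nonneg _) (hφ.const_mul M)
          (ae_of_all _ fun x => by
            show |g x * φ x| ≤ M * φ x
            rw [abs_mul, abs_of_nonneg (hφ0 x)]
            exact mul_le_mul_of_nonneg_right (hgM x) (hφ0 x))
    _ = M * ∫ x, φ x ∂μ := integral_const_mul M _

lemma integrable_mul_of_abs_le {α : Type*} [MeasurableSpace α] {μ : Measure α}
    {g φ : α → ℝ} {M : ℝ} (hg : Measurable g) (hgM : ∀ x, |g x| ≤ M) (hφ : Integrable φ μ) :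
    Integrable (fun x => g x * φ x) μ :=
  hφ.bdd_mul hg.aestronglyMeasurable (ae_of_all _ fun x => (Real.norm_eq_abs _).trans_le (hgM x))

/-- The `φ`-weighted average of `g` over `(c, ∞)`: for the weight `φ x = f(y, x) η₁(x)` this is
`E[s(Y, X) | Y = y, X > c]`. -/
noncomputable def tailAverage (g φ : ℝ → ℝ) (c : ℝ) : ℝ :=
  (∫ u in Ioi c, g u * φ u) / ∫ u in Ioi c, φ u

section TailAverage

variable {g φ : ℝ → ℝ} {M : ℝ}

lemma abs_tailAverage_le (hφ : Integrable φ) (hφ0 : ∀ x, 0 ≤ φ x) (hgM : ∀ x, |g x| ≤ M)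
    (c : ℝ) : |tailAverage g φ c| ≤ M := by
  have hbound := abs_integral_mul_le_of_abs_le hφ.integrableOn hφ0 hgM
    (μ := volume.restrict (Ioi c))
  rcases (setIntegral_nonneg measurableSet_Ioi fun x _ => hφ0 x).eq_or_lt with hden | hden
  · rw [tailAverage, ← hden, div_zero, abs_zero]
    exact (abs_nonneg _).trans (hgM 0)
  · rw [tailAverage, abs_div, abs_of_pos hden, div_le_iff₀ hden]
    exact hbound

lemma tailAverage_mul_integral_Ioi (hφ : Integrable φ) (hφ0 : ∀ x, 0 ≤ φ x)
    (hgM : ∀ x, |g x| ≤ M) (c : ℝ) :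
    tailAverage g φ c * ∫ u in Ioi c, φ u = ∫ u in Ioi c, g u * φ u := by
  by_cases hden : ∫ u in Ioi c, φ u = 0
  · -- a null tail forces a null numerator, so the junk value `x / 0 = 0` is harmless
    have hbound := abs_integral_mul_le_of_abs_le hφ.integrableOn hφ0 hgM
      (μ := volume.restrict (Ioi c))
    rw [hden, mul_zero, abs_nonpos_iff] at hbound
    rw [hden, hbound, mul_zero]
  · exact div_mul_cancel₀ _ hden

lemma measurable_tailAverage (hφ : Integrable φ) (hgφ : Integrable fun u => g u * φ u) :
    Measurable (tailAverage g φ) :=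
  (continuous_integral_Ioi hgφ).measurable.div (continuous_integral_Ioi hφ).measurable

lemma integral_ite_tailAverage_mul (hg : Measurable g) (hgM : ∀ x, |g x| ≤ M)
    (hφ : Integrable φ) (hφ0 : ∀ x, 0 ≤ φ x) (c : ℝ) :
    ∫ x, (if x ≤ c then g x else tailAverage g φ c) * φ x = ∫ x, g x * φ x := by
  have hgφ := integrable_mul_of_abs_le hg hgM hφ
  have hcens : Integrable fun x => (if x ≤ c then g x else tailAverage g φ c) * φ x :=
    integrable_mul_of_abs_le (hg.ite measurableSet_Iic measurable_const)
      (fun x => by split_ifs; exacts [hgM x, abs_tailAverage_le hφ hφ0 hgM c]) hφ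
  rw [← intervalIntegral.integral_Iic_add_Ioi (b := c) hcens.integrableOn hcens.integrableOn,
    ← intervalIntegral.integral_Iic_add_Ioi (b := c) hgφ.integrableOn hgφ.integrableOn]
  congr 1
  · exact setIntegral_congr_fun measurableSet_Iic fun x hx => by rw [if_pos (mem_Iic.1 hx)]
  · rw [← tailAverage_mul_integral_Ioi hφ hφ0 hgM c, ← integral_const_mul]
    exact setIntegral_congr_fun measurableSet_Ioi fun x hx => by
      rw [if_neg (not_le.2 (mem_Ioi.1 hx))]

lemma integral_integral_ite_tailAverage {η : ℝ → ℝ} (hg : Measurable g) (hgM : ∀ x, |g x| ≤ M)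
    (hφ : Integrable φ) (hφ0 : ∀ x, 0 ≤ φ x) (hη : Integrable η) :
    ∫ x, ∫ c, (if x ≤ c then g x else tailAverage g φ c) * (φ x * η c)
      = (∫ c, η c) * ∫ x, g x * φ x := by
  have hgφ := integrable_mul_of_abs_le hg hgM hφ
  have hcens : Integrable (fun p : ℝ × ℝ =>
      (if p.1 ≤ p.2 then g p.1 else tailAverage g φ p.2) * (φ p.1 * η p.2))
      (volume.prod volume) :=
    integrable_mul_of_abs_le
      ((hg.comp measurable_fst).ite (measurableSet_le measurable_fst measurable_snd)
        ((measurable_tailAverage hφ hgφ).comp measurable_snd))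
      (fun p => by split_ifs; exacts [hgM _, abs_tailAverage_le hφ hφ0 hgM _])
      (hφ.mul_prod hη)
  rw [integral_integral_swap hcens, ← integral_mul_const]
  refine integral_congr_ae (ae_of_all _ fun c => ?_)
  simp only [← mul_assoc]
  rw [integral_mul_const, integral_ite_tailAverage_mul hg hgM hφ hφ0 c, mul_comm]

end TailAverage

lemma integrable_prod_mul_of_integral_eq_one {f : ℝ → ℝ → ℝ} {η : ℝ → ℝ}
    (hf : Measurable (Function.uncurry f)) (hf0 : ∀ y x, 0 ≤ f y x)
    (hf1 : ∀ x, ∫ y, f y x = 1) (hη : Integrable η) :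
    Integrable (fun p : ℝ × ℝ => f p.1 p.2 * η p.2) (volume.prod volume) := by
  have hm : AEStronglyMeasurable (fun p : ℝ × ℝ => f p.1 p.2 * η p.2) (volume.prod volume) :=
    hf.aestronglyMeasurable.mul
      (hη.1.comp_quasiMeasurePreserving Measure.quasiMeasurePreserving_snd)
  rw [integrable_prod_iff' hm]
  refine ⟨ae_of_all _ fun x => (integrable_of_integral_eq_one (hf1 x)).mul_const (η x), ?_⟩
  refine hη.norm.congr (ae_of_all _ fun x => ?_)
  simp only [norm_mul, Real.norm_of_nonneg (hf0 _ x), integral_mul_const, hf1 x, one_mul]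

theorem stmt_15_general (η₁ η₂ : ℝ → ℝ) (fYX s : ℝ → ℝ → ℝ)
    (hη₁_int : Integrable η₁) (hη₁_pos : ∀ x, 0 < η₁ x)
    (hη₂_int : Integrable η₂)
    (hf_meas : Measurable (Function.uncurry fYX)) (hf_nonneg : ∀ y x, 0 ≤ fYX y x)
    (hf_one : ∀ x, ∫ y, fYX y x = 1)
    (hs_meas : Measurable (Function.uncurry s)) (hs_bdd : ∃ M, ∀ y x, |s y x| ≤ M)
    (hs_score : ∀ x, ∫ y, s y x * fYX y x = 0) :
    ∫ y, ∫ x, ∫ c,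
      (if x ≤ c then s y x
       else (∫ u in Ioi c, s y u * fYX y u * η₁ u) / (∫ u in Ioi c, fYX y u * η₁ u))
      * (fYX y x * η₁ x * η₂ c) = 0 := by
  obtain ⟨M, hM⟩ := hs_bdd
  have hdens := integrable_prod_mul_of_integral_eq_one hf_meas hf_nonneg hf_one hη₁_int
  have hs_dens : Integrable (fun p : ℝ × ℝ => s p.1 p.2 * (fYX p.1 p.2 * η₁ p.2))
      (volume.prod volume) :=
    integrable_mul_of_abs_le hs_meas (fun p => hM p.1 p.2) hdens
  calc _ = ∫ y, (∫ c, η₂ c) * ∫ x, s y x * (fYX y x * η₁ x) := by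
        refine integral_congr_ae ?_
        filter_upwards [hdens.prod_right_ae] with y hy
        have h := integral_integral_ite_tailAverage (hs_meas.comp measurable_prodMk_left) (hM y)
          hy (fun x => mul_nonneg (hf_nonneg y x) (hη₁_pos x).le) hη₂_int
        simp only [tailAverage, mul_assoc] at h ⊢
        exact h
    _ = (∫ c, η₂ c) * ∫ x, (∫ y, s y x * fYX y x) * η₁ x := by
        rw [integral_const_mul,
          integral_integral_swap (f := fun y x => s y x * (fYX y x * η₁ x)) hs_dens]
        simp only [← mul_assoc, integral_mul_const]
    _ = 0 := by simp only [hs_score, zero_mul, integral_zero, mul_zero]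

theorem stmt_15 (η₁ η₂ : ℝ → ℝ) (fYX s : ℝ → ℝ → ℝ)
    (hη₁_int : Integrable η₁) (hη₁_pos : ∀ x, 0 < η₁ x) (hη₁_one : ∫ x, η₁ x = 1)
    (hη₂_int : Integrable η₂) (hη₂_pos : ∀ c, 0 < η₂ c) (hη₂_one : ∫ c, η₂ c = 1)
    (hf_meas : Measurable (Function.uncurry fYX)) (hf_nonneg : ∀ y x, 0 ≤ fYX y x)
    (hf_one : ∀ x, ∫ y, fYX y x = 1)
    (hs_meas : Measurable (Function.uncurry s)) (hs_bdd : ∃ M, ∀ y x, |s y x| ≤ M)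
    (hs_score : ∀ x, ∫ y, s y x * fYX y x = 0)
    (hden_pos : ∀ y w : ℝ, 0 < ∫ x in Ioi w, fYX y x * η₁ x) :
    ∫ y, ∫ x, ∫ c,
      (if x ≤ c then s y x
       else (∫ u in Ioi c, s y u * fYX y u * η₁ u) / (∫ u in Ioi c, fYX y u * η₁ u))
      * (fYX y x * η₁ x * η₂ c) = 0 :=
  stmt_15_general η₁ η₂ fYX s hη₁_int hη₁_pos hη₂_int hf_meas hf_nonneg hf_one hs_meas hs_bdd
    hs_score
end
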